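/- Let f₁,…,fₙ : ℝ → ℝ be smooth, A = (a_{ij}) an invertible n×n real matrix, and z(x) = Σᵢ fᵢ((Ax)ᵢ). If det(Hess(z)(x)) = 0 for all x, then at least one fᵢ satisfies fᵢ'' ≡ 0, i.e. fᵢ is affine linear (so the hypersurface is a cylinder). -/

import Mathlib

noncomputable def hessian {n : ℕ} (f : (Fin n → ℝ) → ℝ) (x : Fin n → ℝ) :
    Matrix (Fin n) (Fin n) ℝ :=
  fun i j => fderiv ℝ (fun y => fderiv ℝ f y (Pi.single j 1)) x (Pi.single i 1)

open Matrix

noncomputable def Lmap {n : ℕ} (A : Matrix (Fin n) (Fin n) ℝ) (k : Fin n) :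
    (Fin n → ℝ) →L[ℝ] ℝ :=
  LinearMap.toContinuousLinearMap ((LinearMap.proj k).comp A.mulVecLin)

lemma Lmap_apply {n : ℕ} (A : Matrix (Fin n) (Fin n) ℝ) (k : Fin n) (x : Fin n → ℝ) :
    Lmap A k x = A.mulVec x k := rfl

lemma Lmap_single {n : ℕ} (A : Matrix (Fin n) (Fin n) ℝ) (k j : Fin n) :
    Lmap A k (Pi.single j 1) = A k j := by
  simp [Lmap_apply, Matrix.mulVec_single]

lemma hasFDerivAt_z {n : ℕ} (f : Fin n → ℝ → ℝ) (hf : ∀ i, ContDiff ℝ (⊤ : ℕ∞) (f i))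
    (A : Matrix (Fin n) (Fin n) ℝ) (x : Fin n → ℝ) :
    HasFDerivAt (fun y => ∑ k, f k (A.mulVec y k))
      (∑ k, deriv (f k) (A.mulVec x k) • Lmap A k) x := by
  apply HasFDerivAt.fun_sum
  intro k _
  have h1 : HasDerivAt (f k) (deriv (f k) (Lmap A k x)) (Lmap A k x) :=
    ((hf k).differentiable (by simp) (Lmap A k x)).hasDerivAt
  have := h1.comp_hasFDerivAt x (Lmap A k).hasFDerivAt
  exact this

lemma fderiv_z_apply {n : ℕ} (f : Fin n → ℝ → ℝ) (hf : ∀ i, ContDiff ℝ (⊤ : ℕ∞) (f i))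
    (A : Matrix (Fin n) (Fin n) ℝ) (x : Fin n → ℝ) (j : Fin n) :
    fderiv ℝ (fun y => ∑ k, f k (A.mulVec y k)) x (Pi.single j 1)
      = ∑ k, deriv (f k) (A.mulVec x k) * A k j := by
  rw [(hasFDerivAt_z f hf A x).fderiv]
  simp [Lmap_single, smul_eq_mul]

lemma hessian_eq {n : ℕ} (f : Fin n → ℝ → ℝ) (hf : ∀ i, ContDiff ℝ (⊤ : ℕ∞) (f i))
    (A : Matrix (Fin n) (Fin n) ℝ)
    (z : (Fin n → ℝ) → ℝ) (hz : ∀ x, z x = ∑ i, f i (A.mulVec x i))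
    (x : Fin n → ℝ) (i j : Fin n) :
    hessian z x i j = ∑ k, deriv (deriv (f k)) (A.mulVec x k) * A k i * A k j := by
  have hzf : z = fun y => ∑ k, f k (A.mulVec y k) := funext hz
  subst hzf
  unfold hessian
  have key : HasFDerivAt (fun y => fderiv ℝ (fun y => ∑ k, f k (A.mulVec y k)) y (Pi.single j 1))
      (∑ k, A k j • (deriv (deriv (f k)) (A.mulVec x k) • Lmap A k)) x := by
    have heq : (fun y => fderiv ℝ (fun y => ∑ k, f k (A.mulVec y k)) y (Pi.single j 1))
        = fun y => ∑ k, deriv (f k) (A.mulVec y k) * A k j :=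
      funext fun y => fderiv_z_apply f hf A y j
    rw [heq]
    apply HasFDerivAt.fun_sum
    intro k _
    have h8 : ContDiff ℝ ((⊤ : ℕ∞) : WithTop ℕ∞) (f k) := (hf k).of_le (by simp)
    have hd2 : HasDerivAt (deriv (f k)) (deriv (deriv (f k)) (Lmap A k x)) (Lmap A k x) :=
      (((contDiff_infty_iff_deriv.mp h8).2).differentiable (by simp)
        (Lmap A k x)).hasDerivAt
    have h := (hd2.comp_hasFDerivAt x (Lmap A k).hasFDerivAt).mul_const (A k j)
    exact h
  rw [key.fderiv]
  simp [Lmap_single, smul_eq_mul]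
  ring_nf
  apply Finset.sum_congr rfl
  intro k _
  ring

theorem stmt_8 {n : ℕ} (f : Fin n → ℝ → ℝ) (hf : ∀ i, ContDiff ℝ (⊤ : ℕ∞) (f i))
    (A : Matrix (Fin n) (Fin n) ℝ) (hA : IsUnit A.det)
    (z : (Fin n → ℝ) → ℝ) (hz : ∀ x, z x = ∑ i, f i (A.mulVec x i))
    (hK : ∀ x : Fin n → ℝ, (hessian z x).det = 0) :
    ∃ i : Fin n, ∀ t : ℝ, deriv (deriv (f i)) t = 0 := by
  -- the Hessian equals Aᵀ * diagonal (f'' ∘ (Ax)) * A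
  have hmat : ∀ x : Fin n → ℝ, hessian z x
      = Aᵀ * (Matrix.diagonal (fun k => deriv (deriv (f k)) (A.mulVec x k)) * A) := by
    intro x
    ext i j
    rw [hessian_eq f hf A z hz x i j]
    simp [Matrix.mul_apply, Matrix.transpose_apply, Matrix.diagonal_apply, ite_mul,
      Finset.mul_sum]
    apply Finset.sum_congr rfl
    intro k _
    ring
  have hprod : ∀ x : Fin n → ℝ, ∏ k, deriv (deriv (f k)) (A.mulVec x k) = 0 := by
    intro x
    have := hK x
    rw [hmat x] at this
    simp [Matrix.det_mul, Matrix.det_diagonal, Matrix.det_transpose] at this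
    rcases this with h | h | h
    · exact absurd h hA.ne_zero
    · exact h
    · exact absurd h hA.ne_zero
  -- every vector is of the form A.mulVec x
  have hall : ∀ y : Fin n → ℝ, ∏ k, deriv (deriv (f k)) (y k) = 0 := by
    intro y
    have h1 : A.mulVec (A⁻¹.mulVec y) = y := by
      rw [Matrix.mulVec_mulVec, Matrix.mul_nonsing_inv A hA, Matrix.one_mulVec]
    have := hprod (A⁻¹.mulVec y)
    rwa [h1] at this
  by_contra hcon
  push_neg at hcon
  choose t ht using hcon
  have := hall t
  rw [Finset.prod_eq_zero_iff] at this
  obtain ⟨k, _, hk⟩ := this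
  exact ht k hk
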